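/- arXiv:2101.07838 — 2 statements merged into one kernel-verified Lean document; each statement's English description precedes it below -/
import Mathlib

section
/- Let G be a finite group and let H and K be CD-subgroups of G. Then C_G(H ∩ K) = C_G(H)·C_G(K), i.e., the centralizer of the intersection H ∩ K equals the set product of the centralizers of H and of K. -/
open Pointwise

/-- The Chermak–Delgado index-measure of a subgroup `H` of `G`:
`m(G,H) = |G:H| * |G:C_G(H)|`. -/
noncomputable def cdMeasure {G : Type*} [Group G] (H : Subgroup G) : ℕ :=
  H.index * (Subgroup.centralizer (H : Set G)).index

/-- `μ(G)`, the minimum of `m(G,H)` over all subgroups `H ≤ G`. -/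
noncomputable def cdMu (G : Type*) [Group G] : ℕ :=
  sInf {n : ℕ | ∃ H : Subgroup G, cdMeasure H = n}

/-- A subgroup `H ≤ G` is a CD-subgroup if `m(G,H) = μ(G)`. -/
def IsCDSubgroup {G : Type*} [Group G] (H : Subgroup G) : Prop :=
  cdMeasure H = cdMu G

/-!
Write `f(L) = |L| · |C_G(L)|`. Since `m(G,L) · f(L) = |G|²`, the CD-subgroups are the maximizers
of `f`; let `M` be the maximum. As `C_G(⟨H, K⟩) = C_G(H) ∩ C_G(K)`, the bounds `f(H ∩ K) ≤ M` and
`f(⟨H, K⟩) ≤ M` give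
`|C_G(H ∩ K)| · |H ∩ K| · |⟨H, K⟩| · |C_G(H) ∩ C_G(K)| ≤ M² = f(H) · f(K)`,
and the product formula `|AB| · |A ∩ B| = |A| · |B|`, applied to `H, K` and to `C_G(H), C_G(K)`,
together with `|HK| ≤ |⟨H, K⟩|`, gives
`f(H) · f(K) ≤ |⟨H, K⟩| · |H ∩ K| · |C_G(H) C_G(K)| · |C_G(H) ∩ C_G(K)|`.
Hence `|C_G(H ∩ K)| ≤ |C_G(H) C_G(K)|`, so the evident inclusion `C_G(H) C_G(K) ⊆ C_G(H ∩ K)`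
is an equality.
-/

namespace Subgroup

variable {G : Type*} [Group G]

def mulFiberEquivInf (A B : Subgroup G) {a₀ b₀ : G} (ha₀ : a₀ ∈ A) (hb₀ : b₀ ∈ B) :
    {p : A × B // (p.1 : G) * p.2 = a₀ * b₀} ≃ (A ⊓ B : Subgroup G) where
  toFun p := ⟨a₀⁻¹ * p.1.1, A.mul_mem (A.inv_mem ha₀) p.1.1.2, by
    have : a₀⁻¹ * p.1.1 = b₀ * (p.1.2 : G)⁻¹ := by
      rw [inv_mul_eq_iff_eq_mul, ← mul_assoc, eq_mul_inv_iff_mul_eq, p.2]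
    exact this ▸ B.mul_mem hb₀ (B.inv_mem p.1.2.2)⟩
  invFun c :=
    ⟨(⟨a₀ * c, A.mul_mem ha₀ c.2.1⟩, ⟨(c : G)⁻¹ * b₀, B.mul_mem (B.inv_mem c.2.2) hb₀⟩),
      by simp [mul_assoc]⟩
  left_inv := by
    rintro ⟨⟨a, b⟩, hab⟩
    ext
    · simp
    · simp only [mul_inv_rev, inv_inv, mul_assoc, ← hab, inv_mul_cancel_left]
  right_inv c := by ext; simp

lemma card_mul_mul_card_inf [Finite G] (A B : Subgroup G) :
    Nat.card ((A : Set G) * (B : Set G) : Set G) * Nat.card (A ⊓ B : Subgroup G) =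
      Nat.card A * Nat.card B := by
  have := Fintype.ofFinite G
  classical
  let f : A × B → ((A : Set G) * (B : Set G) : Set G) :=
    fun p => ⟨p.1 * p.2, Set.mul_mem_mul p.1.2 p.2.2⟩
  have hfiber (z : ((A : Set G) * (B : Set G) : Set G)) :
      Nat.card {p // f p = z} = Nat.card (A ⊓ B : Subgroup G) := by
    obtain ⟨z, a₀, ha₀, b₀, hb₀, rfl⟩ := z
    rw [← Nat.card_congr (mulFiberEquivInf A B ha₀ hb₀)]
    exact Nat.card_congr (Equiv.subtypeEquivRight fun p => by simp [f, Subtype.ext_iff])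
  rw [← Nat.card_prod A B, ← Nat.card_congr (Equiv.sigmaFiberEquiv f), Nat.card_sigma]
  simp only [hfiber, Finset.sum_const, Finset.card_univ, ← Nat.card_eq_fintype_card, smul_eq_mul]

lemma centralizer_sup (H K : Subgroup G) :
    centralizer ((H ⊔ K : Subgroup G) : Set G) = centralizer H ⊓ centralizer K := by
  have : H ⊔ K = closure ((H : Set G) ∪ K) := by rw [closure_union, closure_eq, closure_eq]
  rw [this, centralizer_closure]
  exact SetLike.coe_injective Set.centralizer_union

end Subgroup

open Subgroup

section CD

variable {G : Type*} [Group G]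

lemma cdMeasure_mul_card_mul_card_centralizer [Finite G] (L : Subgroup G) :
    cdMeasure L * (Nat.card L * Nat.card (centralizer (L : Set G))) = Nat.card G * Nat.card G := by
  rw [cdMeasure, mul_mul_mul_comm, mul_comm L.index, card_mul_index, mul_comm (index _),
    card_mul_index]

lemma IsCDSubgroup.cdMeasure_le {H : Subgroup G} (hH : IsCDSubgroup H) (L : Subgroup G) :
    cdMeasure H ≤ cdMeasure L :=
  hH ▸ Nat.sInf_le ⟨L, rfl⟩

lemma IsCDSubgroup.card_mul_card_centralizer_le [Finite G] {H : Subgroup G} (hH : IsCDSubgroup H)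
    (L : Subgroup G) :
    Nat.card L * Nat.card (centralizer (L : Set G)) ≤
      Nat.card H * Nat.card (centralizer (H : Set G)) := by
  have hpos : 0 < cdMeasure H := Nat.pos_of_ne_zero fun h =>
    Nat.card_pos.ne' (by simpa [h] using cdMeasure_mul_card_mul_card_centralizer H)
  refine Nat.le_of_mul_le_mul_left ?_ hpos
  calc cdMeasure H * (Nat.card L * Nat.card (centralizer (L : Set G)))
      ≤ cdMeasure L * (Nat.card L * Nat.card (centralizer (L : Set G))) :=
        Nat.mul_le_mul_right _ (hH.cdMeasure_le L)
    _ = cdMeasure H * (Nat.card H * Nat.card (centralizer (H : Set G))) := by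
        rw [cdMeasure_mul_card_mul_card_centralizer, cdMeasure_mul_card_mul_card_centralizer]

lemma IsCDSubgroup.card_centralizer_inf_le [Finite G] {H K : Subgroup G} (hH : IsCDSubgroup H)
    (hK : IsCDSubgroup K) :
    Nat.card (centralizer ((H ⊓ K : Subgroup G) : Set G)) ≤
      Nat.card ((centralizer (H : Set G) : Set G) * (centralizer (K : Set G) : Set G) : Set G) := by
  set CH := centralizer (H : Set G)
  set CK := centralizer (K : Set G)
  have hHK : Nat.card ((H : Set G) * (K : Set G) : Set G) ≤ Nat.card (H ⊔ K : Subgroup G) :=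
    Nat.card_mono (Set.toFinite _)
      (mul_subset (SetLike.coe_mono le_sup_left) (SetLike.coe_mono le_sup_right))
  have hinf := hH.card_mul_card_centralizer_le (H ⊓ K)
  have hsup : Nat.card (H ⊔ K : Subgroup G) * Nat.card (CH ⊓ CK : Subgroup G) ≤
      Nat.card K * Nat.card CK := by
    rw [← centralizer_sup]
    exact hK.card_mul_card_centralizer_le (H ⊔ K)
  have hpos : 0 < Nat.card (H ⊓ K : Subgroup G) * Nat.card (H ⊔ K : Subgroup G) *
      Nat.card (CH ⊓ CK : Subgroup G) :=
    Nat.mul_pos (Nat.mul_pos Nat.card_pos Nat.card_pos) Nat.card_pos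
  refine Nat.le_of_mul_le_mul_right ?_ hpos
  calc _ = Nat.card (H ⊓ K : Subgroup G) * Nat.card (centralizer ((H ⊓ K : Subgroup G) : Set G)) *
        (Nat.card (H ⊔ K : Subgroup G) * Nat.card (CH ⊓ CK : Subgroup G)) := by ring
    _ ≤ Nat.card H * Nat.card CH * (Nat.card K * Nat.card CK) := Nat.mul_le_mul hinf hsup
    _ = Nat.card ((H : Set G) * (K : Set G) : Set G) *
        Nat.card ((CH : Set G) * (CK : Set G) : Set G) *
        (Nat.card (H ⊓ K : Subgroup G) * Nat.card (CH ⊓ CK : Subgroup G)) := by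
      rw [mul_mul_mul_comm, ← card_mul_mul_card_inf, ← card_mul_mul_card_inf]; ring
    _ ≤ Nat.card (H ⊔ K : Subgroup G) * Nat.card ((CH : Set G) * (CK : Set G) : Set G) *
        (Nat.card (H ⊓ K : Subgroup G) * Nat.card (CH ⊓ CK : Subgroup G)) := by gcongr
    _ = _ := by ring

end CD

theorem stmt_1 {G : Type*} [Group G] [Finite G] (H K : Subgroup G)
    (hH : IsCDSubgroup H) (hK : IsCDSubgroup K) :
    (Subgroup.centralizer ((H ⊓ K : Subgroup G) : Set G) : Set G) =
      (Subgroup.centralizer (H : Set G) : Set G) *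
        (Subgroup.centralizer (K : Set G) : Set G) := by
  have hsub : (centralizer (H : Set G) : Set G) * (centralizer (K : Set G) : Set G) ⊆
      centralizer ((H ⊓ K : Subgroup G) : Set G) :=
    mul_subset (centralizer_le inf_le_left) (centralizer_le inf_le_right)
  refine (Set.eq_of_subset_of_ncard_le hsub ?_ (Set.toFinite _)).symm
  rw [← Nat.card_coe_set_eq, ← Nat.card_coe_set_eq]
  exact hH.card_centralizer_inf_le hK
end

section
/- Let p be a prime and let G be a non-abelian finite p-group. Then μ(G) = p² if and only if G contains an abelian subgroup of index p. -/
open Pointwise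

/-!
In a non-abelian `p`-group `G/Z(G)` is not cyclic, so `p² ∣ |G:Z(G)|`. Every `m(G,H)` is a
power of `p`, and when one of its factors is `1` we have `H = G` or `H ≤ Z(G)`, so `|G:Z(G)|`
divides `m(G,H)`; hence `p² ∣ m(G,H)` for all `H`. An abelian `A` of index `p` lies in its own
centralizer, so `m(G,A) ≤ p²` and `μ(G) = p²`. Conversely, if `m(G,H) = p²`, then either
`|G:Z(G)| = p²`, and any subgroup of index `p` containing `Z(G)` is abelian, or
`|G:H| = |G:C_G(H)| = p`, and `C_G(H)` is abelian because `H ∩ C_G(H)` is central in it of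
index at most `p`.
-/

open Subgroup

section General

variable {G : Type*} [Group G]

lemma isMulCommutative_of_index_center_dvd_prime {p : ℕ} (hp : p.Prime)
    (h : (center G).index ∣ p) : IsMulCommutative G :=
  have := Fact.mk hp
  haveI : IsCyclic (G ⧸ center G) := isCyclic_of_card_dvd_prime h
  isMulCommutative_of_isCyclic_quotient_center_self G

lemma isMulCommutative_of_le_centralizer_of_relIndex_dvd_prime {p : ℕ} (hp : p.Prime)
    {N K : Subgroup G} (hNK : N ≤ centralizer K) (h : N.relIndex K ∣ p) :
    IsMulCommutative K := by
  have hN : N.subgroupOf K ≤ center K := fun x hx => mem_center_iff.mpr fun k =>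
    Subtype.ext (mem_centralizer_iff.mp (hNK (mem_subgroupOf.mp hx)) k k.2)
  exact isMulCommutative_of_index_center_dvd_prime hp ((index_dvd_of_le hN).trans h)

lemma index_center_dvd_cdMeasure {H : Subgroup G}
    (h : H.index = 1 ∨ (centralizer (H : Set G)).index = 1) :
    (center G).index ∣ cdMeasure H := by
  rcases h with h | h
  · obtain rfl := index_eq_one.mp h
    simp [cdMeasure, centralizer_univ]
  · rw [index_eq_one, centralizer_eq_top_iff_subset] at h
    exact (index_dvd_of_le h).mul_right _

lemma cdMeasure_dvd_index_sq {A : Subgroup G} [IsMulCommutative A] :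
    cdMeasure A ∣ A.index ^ 2 :=
  sq A.index ▸ mul_dvd_mul_left _ (index_dvd_of_le (le_centralizer A))

lemma cdMeasure_pos [Finite G] (H : Subgroup G) : 0 < cdMeasure H :=
  Nat.mul_pos (Nat.pos_of_ne_zero index_ne_zero_of_finite)
    (Nat.pos_of_ne_zero index_ne_zero_of_finite)

variable (G) in
lemma exists_cdMeasure_eq_cdMu : ∃ H : Subgroup G, cdMeasure H = cdMu G :=
  Nat.sInf_mem (s := {n | ∃ H : Subgroup G, cdMeasure H = n}) ⟨_, ⊤, rfl⟩

lemma cdMu_le_cdMeasure (H : Subgroup G) : cdMu G ≤ cdMeasure H :=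
  Nat.sInf_le ⟨H, rfl⟩

lemma exists_isMulCommutative_index_eq_of_index_center_eq_sq [Finite G] {p : ℕ} (hp : p.Prime)
    (hZ : (center G).index = p ^ 2) : ∃ A : Subgroup G, IsMulCommutative A ∧ A.index = p := by
  have := Fact.mk hp
  obtain ⟨K, hK⟩ := Sylow.exists_subgroup_card_pow_prime (G := G ⧸ center G) p (n := 1)
    (by rw [← index_eq_card, hZ]; exact pow_dvd_pow p one_le_two)
  have hKp : K.index = p := by
    have := K.card_mul_index
    rw [hK, ← index_eq_card, hZ, pow_one, sq] at this
    exact Nat.eq_of_mul_eq_mul_left hp.pos this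
  set A := K.comap (QuotientGroup.mk' (center G))
  have hAp : A.index = p := (index_comap_of_surjective K (QuotientGroup.mk'_surjective _)).trans hKp
  have hZA : center G ≤ A := QuotientGroup.ker_mk' (center G) ▸ MonoidHom.ker_le_comap _ K
  have hZA' : (center G).relIndex A = p := by
    have := relIndex_mul_index hZA
    rw [hAp, hZ, sq] at this
    exact Nat.eq_of_mul_eq_mul_right hp.pos this
  exact ⟨A, isMulCommutative_of_le_centralizer_of_relIndex_dvd_prime hp
    (center_le_centralizer _) hZA'.dvd, hAp⟩

end General

namespace IsPGroup

variable {G : Type*} [Group G] [Finite G] {p : ℕ} [hp : Fact p.Prime]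

lemma sq_dvd_index_center (hG : IsPGroup p G) (hnc : ¬ IsMulCommutative G) :
    p ^ 2 ∣ (center G).index := by
  obtain ⟨k, hk⟩ := hG.index (center G)
  have hk2 : 2 ≤ k := not_lt.mp fun hk2 => hnc <|
    isMulCommutative_of_index_center_dvd_prime hp.out <| by
      rw [hk]; simpa using pow_dvd_pow p (Nat.lt_succ_iff.mp hk2)
  exact hk ▸ pow_dvd_pow p hk2

lemma sq_dvd_cdMeasure (hG : IsPGroup p G) (hnc : ¬ IsMulCommutative G) (H : Subgroup G) :
    p ^ 2 ∣ cdMeasure H := by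
  obtain ⟨a, ha⟩ := hG.index H
  obtain ⟨b, hb⟩ := hG.index (centralizer (H : Set G))
  by_cases hab : a = 0 ∨ b = 0
  · exact (hG.sq_dvd_index_center hnc).trans <| index_center_dvd_cdMeasure <|
      hab.imp (fun h => by simpa [h] using ha) (fun h => by simpa [h] using hb)
  · obtain ⟨ha0, hb0⟩ := not_or.mp hab
    rw [cdMeasure, ha, hb, sq]
    exact mul_dvd_mul (dvd_pow_self p ha0) (dvd_pow_self p hb0)

lemma isMulCommutative_centralizer_of_index_eq (hG : IsPGroup p G) {H : Subgroup G}
    (hH : H.index = p) : IsMulCommutative (centralizer (H : Set G)) := by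
  set K := centralizer (H : Set G)
  obtain ⟨k, hk⟩ := (hG.to_subgroup K).index (H.subgroupOf K)
  have hk1 : k ≤ 1 := by
    have := relIndex_le_of_le_right (H := H) (le_top : K ≤ ⊤)
      (by rw [relIndex_top_right, hH]; exact hp.out.ne_zero)
    rw [relIndex_top_right, relIndex, hk, hH] at this
    exact (Nat.pow_le_pow_iff_right hp.out.one_lt).mp (by simpa using this)
  refine isMulCommutative_of_le_centralizer_of_relIndex_dvd_prime hp.out
    (le_centralizer_iff.mpr le_rfl) ?_
  rw [relIndex, hk]
  simpa using pow_dvd_pow p hk1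

lemma exists_isMulCommutative_index_eq_of_cdMeasure_eq_sq (hG : IsPGroup p G)
    (hnc : ¬ IsMulCommutative G) {H : Subgroup G} (hH : cdMeasure H = p ^ 2) :
    ∃ A : Subgroup G, IsMulCommutative A ∧ A.index = p := by
  obtain ⟨a, ha⟩ := hG.index H
  obtain ⟨b, hb⟩ := hG.index (centralizer (H : Set G))
  have hab : a + b = 2 := by
    rw [cdMeasure, ha, hb, ← pow_add] at hH
    exact Nat.pow_right_injective hp.out.two_le hH
  by_cases h0 : a = 0 ∨ b = 0
  · refine exists_isMulCommutative_index_eq_of_index_center_eq_sq hp.out ?_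
    refine Nat.dvd_antisymm (hH ▸ index_center_dvd_cdMeasure ?_) (hG.sq_dvd_index_center hnc)
    exact h0.imp (fun h => by simpa [h] using ha) (fun h => by simpa [h] using hb)
  · obtain ⟨rfl, rfl⟩ : a = 1 ∧ b = 1 := by omega
    rw [pow_one] at ha hb
    exact ⟨_, hG.isMulCommutative_centralizer_of_index_eq ha, hb⟩

end IsPGroup

theorem stmt_14 {G : Type*} [Group G] [Finite G] (p : ℕ) (hp : p.Prime)
    (hpG : IsPGroup p G) (hnonab : ¬ ∀ a b : G, a * b = b * a) :
    cdMu G = p ^ 2 ↔ ∃ A : Subgroup G, IsMulCommutative A ∧ A.index = p := by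
  have := Fact.mk hp
  have hnc : ¬ IsMulCommutative G := fun h => hnonab h.is_comm.comm
  obtain ⟨H, hH⟩ := exists_cdMeasure_eq_cdMu G
  refine ⟨fun hμ => hpG.exists_isMulCommutative_index_eq_of_cdMeasure_eq_sq hnc (hH.trans hμ),
    fun ⟨A, hA, hAp⟩ => le_antisymm ?_ ?_⟩
  · calc cdMu G ≤ cdMeasure A := cdMu_le_cdMeasure A
      _ ≤ A.index ^ 2 := Nat.le_of_dvd (hAp ▸ pow_pos hp.pos 2) cdMeasure_dvd_index_sq
      _ = p ^ 2 := by rw [hAp]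
  · exact hH ▸ Nat.le_of_dvd (cdMeasure_pos H) (hpG.sq_dvd_cdMeasure hnc H)
end
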